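/- arXiv:1106.5774 — 5 statements merged into one kernel-verified Lean document; each statement's English description precedes it below -/
import Mathlib

section
/- Let {uₖ} ⊂ Y be a biorthogonal system with functionals {ψₖ}, set Qₘ = q_{2m-1} + q_{2m} where qⱼ(x) = ψⱼ(x)uⱼ. Assume Σₘ Qₘ y = y for all y ∈ Y (convergence of 2D-block partial sums). If sup_j ‖qⱼ‖ < ∞ then {uₖ} is a Schauder basis of Y. -/
/-!
The partial sum with an even number of terms is a block partial sum, so it converges. The one
with an odd number `2M + 1` differs from it by `q_{2M} y`, and biorthogonality gives
`q_{2M} y = q_{2M} (Q_M y)`, so `‖q_{2M} y‖ ≤ T ‖Q_M y‖`; this tends to zero because `Q_M y` is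
the difference of two consecutive block partial sums.
-/

open Filter Finset Topology

theorem Filter.Tendsto.of_comp_two_mul_of_comp_two_mul_add_one {X : Type*} {s : ℕ → X}
    {l : Filter X} (heven : Tendsto (fun n => s (2 * n)) atTop l)
    (hodd : Tendsto (fun n => s (2 * n + 1)) atTop l) : Tendsto s atTop l := by
  intro U hU
  obtain ⟨a, ha⟩ := eventually_atTop.1 (heven hU)
  obtain ⟨b, hb⟩ := eventually_atTop.1 (hodd hU)
  refine eventually_atTop.2 ⟨2 * a + 2 * b, fun n hn => ?_⟩
  obtain ⟨k, rfl | rfl⟩ := Nat.even_or_odd' n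
  exacts [ha k (by omega), hb k (by omega)]

theorem Finset.sum_range_two_mul {M : Type*} [AddCommMonoid M] (f : ℕ → M) (n : ℕ) :
    ∑ i ∈ range (2 * n), f i = ∑ i ∈ range n, (f (2 * i) + f (2 * i + 1)) := by
  induction n with
  | zero => simp
  | succ n ih =>
    rw [Nat.mul_succ, sum_range_succ, sum_range_succ, sum_range_succ, ih, add_assoc]

theorem tendsto_nhds_zero_of_tendsto_sum_range {G : Type*} [AddCommGroup G] [TopologicalSpace G]
    [IsTopologicalAddGroup G] {f : ℕ → G} {a : G}
    (h : Tendsto (fun n => ∑ i ∈ range n, f i) atTop (𝓝 a)) : Tendsto f atTop (𝓝 0) := by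
  have hdiff := (h.comp (tendsto_add_atTop_nat 1)).sub h
  simpa only [Function.comp_def, sum_range_succ, add_sub_cancel_left, sub_self] using hdiff

theorem norm_smul_le_of_biorthogonal {𝕜 E : Type*} [NormedField 𝕜] [NormedAddCommGroup E]
    [NormedSpace 𝕜 E] {u v : E} {φ χ : E →L[𝕜] 𝕜} (hu : φ u = 1) (hv : φ v = 0) {T : ℝ}
    (hT : ∀ y, ‖φ y • u‖ ≤ T * ‖y‖) (y : E) :
    ‖φ y • u‖ ≤ T * ‖φ y • u + χ y • v‖ := by
  have hpair : φ (φ y • u + χ y • v) = φ y := by simp [hu, hv]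
  simpa only [hpair] using hT (φ y • u + χ y • v)

theorem stmt2_general {Y : Type*} [NormedAddCommGroup Y] [NormedSpace ℂ Y]
    (u : ℕ → Y) (ψ : ℕ → Y →L[ℂ] ℂ)
    (hbi : ∀ k j, ψ k (u j) = if k = j then 1 else 0)
    (hblock : ∀ y : Y, Filter.Tendsto
      (fun M => ∑ m ∈ Finset.range M, (ψ (2*m) y • u (2*m) + ψ (2*m+1) y • u (2*m+1)))
      Filter.atTop (nhds y))
    (T : ℝ) (hT : ∀ j (y : Y), ‖ψ j y • u j‖ ≤ T * ‖y‖) :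
    ∀ y : Y, Filter.Tendsto (fun N => ∑ k ∈ Finset.range N, ψ k y • u k)
      Filter.atTop (nhds y) := by
  intro y
  have heven : Tendsto (fun M => ∑ k ∈ range (2 * M), ψ k y • u k) atTop (𝓝 y) := by
    simpa only [sum_range_two_mul] using hblock y
  have hblock_zero := (tendsto_nhds_zero_of_tendsto_sum_range (hblock y)).norm.const_mul T
  rw [norm_zero, mul_zero] at hblock_zero
  have hq_zero : Tendsto (fun M => ψ (2 * M) y • u (2 * M)) atTop (𝓝 0) :=
    squeeze_zero_norm
      (fun M => norm_smul_le_of_biorthogonal (by simp [hbi]) (by simp [hbi]) (hT _) y)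
      hblock_zero
  refine heven.of_comp_two_mul_of_comp_two_mul_add_one ?_
  simpa only [sum_range_succ, add_zero] using heven.add hq_zero

theorem stmt2 {Y : Type*} [NormedAddCommGroup Y] [NormedSpace ℂ Y] [CompleteSpace Y]
    (u : ℕ → Y) (ψ : ℕ → Y →L[ℂ] ℂ)
    (hbi : ∀ k j, ψ k (u j) = if k = j then 1 else 0)
    (hblock : ∀ y : Y, Filter.Tendsto
      (fun M => ∑ m ∈ Finset.range M, (ψ (2*m) y • u (2*m) + ψ (2*m+1) y • u (2*m+1)))
      Filter.atTop (nhds y))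
    (T : ℝ) (hT : ∀ j (y : Y), ‖ψ j y • u j‖ ≤ T * ‖y‖) :
    ∀ y : Y, Filter.Tendsto (fun N => ∑ k ∈ Finset.range N, ψ k y • u k)
      Filter.atTop (nhds y) :=
  stmt2_general u ψ hbi hblock T hT
end

section
/- For every integer n ≥ 3, the sum over all integers j with j ≡ n (mod 2), j ≠ ±n, of 1/|n² − j²| is at most (2 log n)/n. -/
open Finset
noncomputable def Hr (N : ℕ) : ℝ := ∑ k ∈ Finset.Ioc 0 N, (k : ℝ)⁻¹

lemma Hr_eq_harmonic (N : ℕ) : Hr N = (harmonic N : ℝ) := by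
  rw [harmonic_eq_sum_Icc, Hr]
  rw [show (1:ℕ) = 0 + 1 from rfl, Finset.Icc_add_one_left_eq_Ioc]
  push_cast
  rfl

lemma Hr_nonneg (N : ℕ) : 0 ≤ Hr N := Finset.sum_nonneg fun k _ => by positivity

lemma Hr_mono {M N : ℕ} (h : M ≤ N) : Hr M ≤ Hr N :=
  Finset.sum_le_sum_of_subset_of_nonneg (Finset.Ioc_subset_Ioc_right h)
    (fun k _ _ => by positivity)

lemma Hr_le (N : ℕ) : Hr N ≤ 1 + Real.log N := by
  rw [Hr_eq_harmonic]; exact harmonic_le_one_add_log N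

lemma telescope (n M : ℕ) :
    ∑ k ∈ Finset.Ioc 0 M, ((k : ℝ)⁻¹ - ((n : ℝ) + k)⁻¹) ≤ Hr n := by
  rw [Finset.sum_sub_distrib]
  have h1 : ∑ k ∈ Finset.Ioc 0 M, ((n : ℝ) + k)⁻¹
      = ∑ k ∈ Finset.Ioc n (n + M), (k : ℝ)⁻¹ := by
    refine Finset.sum_nbij' (fun k => n + k) (fun k => k - n) ?_ ?_ ?_ ?_ ?_ <;>
      simp only [Finset.mem_Ioc] <;> intros <;> first
        | omega
        | (push_cast; ring_nf)
  rw [h1]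
  have h2 : Hr n + ∑ k ∈ Finset.Ioc n (n + M), (k : ℝ)⁻¹ = Hr (n + M) :=
    Finset.sum_Ioc_consecutive _ (Nat.zero_le n) (Nat.le_add_right n M)
  have h3 : Hr M ≤ Hr (n + M) := Hr_mono (Nat.le_add_left M n)
  unfold Hr at *
  linarith

noncomputable def F (n : ℕ) (j : ℤ) : ℝ :=
  if (j - (n : ℤ)) % 2 = 0 ∧ j ≠ (n : ℤ) ∧ j ≠ -(n : ℤ)
    then 1 / |(n : ℝ) ^ 2 - (j : ℝ) ^ 2| else 0

lemma F_nonneg (n : ℕ) (j : ℤ) : 0 ≤ F n j := by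
  unfold F; split <;> positivity

lemma F_neg (n : ℕ) (j : ℤ) : F n (-j) = F n j := by
  unfold F
  have h : ((-j - (n:ℤ)) % 2 = 0 ∧ -j ≠ (n:ℤ) ∧ -j ≠ -(n:ℤ))
      ↔ ((j - (n:ℤ)) % 2 = 0 ∧ j ≠ (n:ℤ) ∧ j ≠ -(n:ℤ)) := by omega
  rw [if_congr h rfl rfl]
  push_cast
  ring_nf

lemma F_le (n : ℕ) (j : ℤ) : F n j ≤ 1 / |(n : ℝ) ^ 2 - (j : ℝ) ^ 2| := by
  unfold F; split
  · exact le_refl _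
  · positivity

lemma F_left (n m : ℕ) (hn : 3 ≤ n) (hm1 : 1 ≤ m) (hm2 : 2 * m ≤ n) :
    F n ((n : ℤ) - 2 * m) ≤ 1 / (2 * n) * (m : ℝ)⁻¹ := by
  refine (F_le n _).trans ?_
  have hmR : (1 : ℝ) ≤ m := by exact_mod_cast hm1
  have hnR : 2 * (m : ℝ) ≤ n := by exact_mod_cast hm2
  have habs : |(n : ℝ) ^ 2 - ((((n : ℤ) - 2 * m) : ℤ) : ℝ) ^ 2|
      = 4 * m * ((n : ℝ) - m) := by
    push_cast
    rw [abs_of_nonneg (by nlinarith)]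
    ring
  rw [habs, show (1:ℝ) / (2 * n) * (m : ℝ)⁻¹ = 1 / (2 * n * m) by
    rw [one_div, one_div, ← mul_inv]]
  exact one_div_le_one_div_of_le (by nlinarith) (by nlinarith)

lemma F_right (n k : ℕ) (hn : 3 ≤ n) (hk : 1 ≤ k) :
    F n ((n : ℤ) + 2 * k) ≤ 1 / (4 * n) * ((k : ℝ)⁻¹ - ((n : ℝ) + k)⁻¹) := by
  refine (F_le n _).trans ?_
  have hkR : (1 : ℝ) ≤ k := by exact_mod_cast hk
  have hnR : (3 : ℝ) ≤ n := by exact_mod_cast hn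
  have habs : |(n : ℝ) ^ 2 - ((((n : ℤ) + 2 * k) : ℤ) : ℝ) ^ 2|
      = 4 * k * ((n : ℝ) + k) := by
    push_cast
    rw [abs_of_nonpos (by nlinarith), neg_sub]
    ring
  rw [habs, show 1 / (4 * (n:ℝ)) * ((k : ℝ)⁻¹ - ((n : ℝ) + k)⁻¹)
      = 1 / (4 * k * ((n : ℝ) + k)) by
    field_simp
    ring]

lemma sum_half (n M : ℕ) (hn : 3 ≤ n) :
    ∑ j ∈ Finset.Icc (0 : ℤ) M, F n j
      ≤ 1 / (2 * n) * Hr (n / 2) + 1 / (4 * n) * Hr n := by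
  classical
  set t1 := (Finset.Ioc 0 (n / 2)).image (fun m : ℕ => (n : ℤ) - 2 * m) with ht1
  set t2 := (Finset.Ioc 0 M).image (fun k : ℕ => (n : ℤ) + 2 * k) with ht2
  have step1 : ∑ j ∈ Finset.Icc (0 : ℤ) M, F n j ≤ ∑ j ∈ t1 ∪ t2, F n j := by
    rw [← Finset.sum_filter_ne_zero (Finset.Icc (0 : ℤ) M)]
    refine Finset.sum_le_sum_of_subset_of_nonneg ?_ (fun j _ _ => F_nonneg n j)
    intro j hj
    rw [Finset.mem_filter, Finset.mem_Icc] at hj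
    obtain ⟨⟨hj0, hjM⟩, hne⟩ := hj
    have hc : (j - (n : ℤ)) % 2 = 0 ∧ j ≠ (n : ℤ) ∧ j ≠ -(n : ℤ) := by
      by_contra hcc
      exact hne (by rw [F, if_neg hcc])
    rw [Finset.mem_union]
    rcases lt_or_gt_of_ne hc.2.1 with hlt | hgt
    · left
      rw [Finset.mem_image]
      exact ⟨((n : ℤ) - j).toNat / 2, Finset.mem_Ioc.mpr (by omega), by omega⟩
    · right
      rw [Finset.mem_image]
      exact ⟨(j - (n : ℤ)).toNat / 2, Finset.mem_Ioc.mpr (by omega), by omega⟩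
  have hdisj : Disjoint t1 t2 := by
    rw [Finset.disjoint_left]
    intro a ha1 ha2
    rw [ht1, Finset.mem_image] at ha1
    rw [ht2, Finset.mem_image] at ha2
    obtain ⟨m, hm, hma⟩ := ha1
    obtain ⟨k, hk, hka⟩ := ha2
    rw [Finset.mem_Ioc] at hm hk
    omega
  have e1 : ∑ j ∈ t1, F n j = ∑ m ∈ Finset.Ioc 0 (n / 2), F n ((n : ℤ) - 2 * m) := by
    rw [ht1, Finset.sum_image (by intro x _ y _ h; simp only at h; omega)]
  have e2 : ∑ j ∈ t2, F n j = ∑ k ∈ Finset.Ioc 0 M, F n ((n : ℤ) + 2 * k) := by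
    rw [ht2, Finset.sum_image (by intro x _ y _ h; simp only at h; omega)]
  have b1 : ∑ m ∈ Finset.Ioc 0 (n / 2), F n ((n : ℤ) - 2 * m)
      ≤ 1 / (2 * n) * Hr (n / 2) := by
    rw [Hr, Finset.mul_sum]
    refine Finset.sum_le_sum fun m hm => ?_
    rw [Finset.mem_Ioc] at hm
    exact F_left n m hn (by omega) (by omega)
  have b2 : ∑ k ∈ Finset.Ioc 0 M, F n ((n : ℤ) + 2 * k) ≤ 1 / (4 * n) * Hr n := by
    calc ∑ k ∈ Finset.Ioc 0 M, F n ((n : ℤ) + 2 * k)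
        ≤ ∑ k ∈ Finset.Ioc 0 M, 1 / (4 * (n:ℝ)) * ((k : ℝ)⁻¹ - ((n : ℝ) + k)⁻¹) := by
          refine Finset.sum_le_sum fun k hk => ?_
          rw [Finset.mem_Ioc] at hk
          exact F_right n k hn (by omega)
      _ = 1 / (4 * (n:ℝ)) * ∑ k ∈ Finset.Ioc 0 M, ((k : ℝ)⁻¹ - ((n : ℝ) + k)⁻¹) := by
          rw [Finset.mul_sum]
      _ ≤ 1 / (4 * n) * Hr n := by
          refine mul_le_mul_of_nonneg_left (telescope n M) (by positivity)
  calc ∑ j ∈ Finset.Icc (0 : ℤ) M, F n j ≤ ∑ j ∈ t1 ∪ t2, F n j := step1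
    _ = ∑ j ∈ t1, F n j + ∑ j ∈ t2, F n j := Finset.sum_union hdisj
    _ ≤ _ := by rw [e1, e2]; exact add_le_add b1 b2

lemma sum_sym (n M : ℕ) :
    ∑ j ∈ Finset.Icc (-(M : ℤ)) M, F n j ≤ 2 * ∑ j ∈ Finset.Icc (0 : ℤ) M, F n j := by
  have hU : Finset.Ico (-(M : ℤ)) 0 ∪ Finset.Icc (0 : ℤ) M = Finset.Icc (-(M : ℤ)) M := by
    ext j
    simp only [Finset.mem_union, Finset.mem_Ico, Finset.mem_Icc]
    omega
  have hD : Disjoint (Finset.Ico (-(M : ℤ)) 0) (Finset.Icc (0 : ℤ) M) := by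
    rw [Finset.disjoint_left]
    intro a ha hb
    rw [Finset.mem_Ico] at ha
    rw [Finset.mem_Icc] at hb
    omega
  have hsplit : ∑ j ∈ Finset.Ico (-(M : ℤ)) 0, F n j + ∑ j ∈ Finset.Icc (0 : ℤ) M, F n j
      = ∑ j ∈ Finset.Icc (-(M : ℤ)) M, F n j := by
    rw [← hU, Finset.sum_union hD]
  have h3 : ∑ j ∈ Finset.Ico (-(M : ℤ)) 0, F n j = ∑ j ∈ Finset.Icc (1 : ℤ) M, F n j := by
    refine Finset.sum_nbij' (fun j => -j) (fun j => -j) ?_ ?_ ?_ ?_ ?_ <;>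
      simp only [Finset.mem_Ico, Finset.mem_Icc] <;> intros <;>
      first | omega | rw [← F_neg]
  have h4 : ∑ j ∈ Finset.Icc (1 : ℤ) M, F n j ≤ ∑ j ∈ Finset.Icc (0 : ℤ) M, F n j :=
    Finset.sum_le_sum_of_subset_of_nonneg
      (Finset.Icc_subset_Icc_left (by omega)) (fun j _ _ => F_nonneg n j)
  rw [← hsplit]
  linarith

lemma key (n : ℕ) (hn : 3 ≤ n) : Hr (n / 2) + Hr n / 2 ≤ 2 * Real.log n := by
  have hlog2 : (0.6931471803 : ℝ) < Real.log 2 := Real.log_two_gt_d9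
  have hlog3 : (1 : ℝ) ≤ Real.log 3 := by
    rw [Real.le_log_iff_exp_le (by norm_num)]
    exact (Real.exp_one_lt_d9.le.trans (by norm_num))
  have hBn : Hr n ≤ 1 + Real.log n := Hr_le n
  have hmono : ∀ a b : ℕ, 0 < a → a ≤ b → Real.log a ≤ Real.log b := fun a b ha hab =>
    Real.log_le_log (by exact_mod_cast ha) (by exact_mod_cast hab)
  by_cases h6 : 6 ≤ n
  · -- large case
    have hh3 : 3 ≤ n / 2 := by omega
    have hA : Hr (n / 2) ≤ 1 + Real.log (n / 2 : ℕ) := Hr_le (n / 2)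
    have hhalf : ((n / 2 : ℕ) : ℝ) ≤ (n : ℝ) / 2 := by
      have : 2 * (n / 2) ≤ n := by omega
      have := (Nat.cast_le (α := ℝ)).mpr this
      push_cast at this
      linarith
    have hlogh : Real.log (n / 2 : ℕ) ≤ Real.log n - Real.log 2 := by
      have h1 : Real.log (n / 2 : ℕ) ≤ Real.log ((n : ℝ) / 2) :=
        Real.log_le_log (by exact_mod_cast (by omega : 0 < n / 2)) hhalf
      rw [Real.log_div (by positivity) (by norm_num)] at h1
      exact h1
    have hlogn : Real.log 2 + Real.log 3 ≤ Real.log n := by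
      have h1 : Real.log (6:ℕ) ≤ Real.log n := hmono 6 n (by norm_num) h6
      have h2 : Real.log ((6:ℕ):ℝ) = Real.log 2 + Real.log 3 := by
        rw [show ((6:ℕ):ℝ) = 2 * 3 by norm_num, Real.log_mul (by norm_num) (by norm_num)]
      linarith
    linarith
  · have hlt : n < 6 := by omega
    have hv1 : Hr 1 = 1 := by
      rw [Hr, show Finset.Ioc 0 1 = {1} from by decide]
      norm_num
    have hv2 : Hr 2 = 3 / 2 := by
      rw [Hr, show Finset.Ioc 0 2 = {1, 2} from by decide]
      norm_num
    interval_cases n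
    · -- n = 3
      rw [show (3:ℕ)/2 = 1 from rfl, hv1]
      push_cast at hBn ⊢
      linarith
    · -- n = 4
      have h4 : Real.log 4 ≤ Real.log ((4:ℕ):ℝ) := by norm_num
      have : (2:ℝ) * Real.log 2 = Real.log 4 := by
        rw [show (4:ℝ) = 2 * 2 by norm_num, Real.log_mul (by norm_num) (by norm_num)]
        ring
      rw [show (4:ℕ)/2 = 2 from rfl, hv2]
      push_cast at hBn ⊢
      linarith
    · -- n = 5
      have h5 : Real.log 4 ≤ Real.log (5:ℝ) := by
        have := hmono 4 5 (by norm_num) (by norm_num)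
        push_cast at this
        linarith
      have : (2:ℝ) * Real.log 2 = Real.log 4 := by
        rw [show (4:ℝ) = 2 * 2 by norm_num, Real.log_mul (by norm_num) (by norm_num)]
        ring
      rw [show (5:ℕ)/2 = 2 from rfl, hv2]
      push_cast at hBn ⊢
      linarith

theorem stmt5 (n : ℕ) (hn : 3 ≤ n) :
    (∑' j : ℤ, if (j - (n : ℤ)) % 2 = 0 ∧ j ≠ (n : ℤ) ∧ j ≠ -(n : ℤ)
        then 1 / |(n : ℝ) ^ 2 - (j : ℝ) ^ 2| else 0)
      ≤ 2 * Real.log n / n := by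
  have hn0 : (0 : ℝ) < n := by exact_mod_cast (by omega : 0 < n)
  have hlog : 0 ≤ Real.log n :=
    Real.log_nonneg (by exact_mod_cast (by omega : 1 ≤ n))
  refine tsum_le_of_sum_le' (by positivity) ?_
  intro s
  set M := s.sup (fun j => j.natAbs) with hM
  have hsub : s ⊆ Finset.Icc (-(M : ℤ)) M := by
    intro j hj
    have : j.natAbs ≤ M := Finset.le_sup (f := fun j : ℤ => j.natAbs) hj
    rw [Finset.mem_Icc]
    omega
  have hk := key n hn
  calc ∑ j ∈ s, (if (j - (n : ℤ)) % 2 = 0 ∧ j ≠ (n : ℤ) ∧ j ≠ -(n : ℤ)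
        then 1 / |(n : ℝ) ^ 2 - (j : ℝ) ^ 2| else 0)
      = ∑ j ∈ s, F n j := rfl
    _ ≤ ∑ j ∈ Finset.Icc (-(M : ℤ)) M, F n j :=
        Finset.sum_le_sum_of_subset_of_nonneg hsub (fun j _ _ => F_nonneg n j)
    _ ≤ 2 * ∑ j ∈ Finset.Icc (0 : ℤ) M, F n j := sum_sym n M
    _ ≤ 2 * (1 / (2 * n) * Hr (n / 2) + 1 / (4 * n) * Hr n) := by
        have := sum_half n M hn
        linarith
    _ = (Hr (n / 2) + Hr n / 2) / n := by
        field_simp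
        ring
    _ ≤ 2 * Real.log n / n := by gcongr
end

section
/- Let A > 0 and V : 2ℤ → ℂ satisfy 1/A ≤ |V(k)| ≤ A for all k. Define, for n ≥ 3 and |z| < n/2, S_k^±(n,z) = Σ_{j₁,…,j_k ≠ ±n, jᵢ ≡ n mod 2} V(±n−j₁)V(j₁−j₂)⋯V(j_{k-1}−j_k)V(j_k ∓(−1)·n) / ((n²−j₁²+z)⋯(n²−j_k²+z)). Then |S_k^±(n,z)| ≤ (4A)^{k+1} ((log n)/n)^k, and consequently Σ_{k≥1} |S_k^±(n,z)| = O((log n)/n) as n → ∞. -/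
/-!
Every summand of `hillS V n z s k` is at most `A ^ (k + 2) * ∏ᵢ 2 / |n² - jᵢ²|`: the numerator is
a product of `k + 2` values of `V` at even arguments, and `|n² - j²| ≥ 2n > 4‖z‖` makes each
factor of the denominator at least `|n² - j²| / 2`. Summed over `j : Fin (k + 1) → ℤ`, the product
weight is the `(k + 1)`-st power of the one-dimensional sum of `1 / |n² - j²|` over `j ≡ n (mod 2)`.
Writing `j = n + 2t` gives `|n² - j²| = 4|t||t + n|`, and the partial fractions
`1 / (t (t + n)) = (1 / t - 1 / (t + n)) / n` bound that sum by `harmonic n / n ≤ 2 log n / n`.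
Once `4 A log n / n ≤ 1 / 2`, the bounds for the individual `k` form a geometric series.
-/

/-- The `k+1`-fold term `S_{k+1}^±(n,z)` in the expansion of `β_n^±(v;z)`:
for `s = 1` it is `S^+`, for `s = -1` it is `S^-`. -/
noncomputable def hillS (V : ℤ → ℂ) (n : ℕ) (z : ℂ) (s : ℤ) (k : ℕ) : ℂ :=
  ∑' j : Fin (k + 1) → ℤ,
    if (∀ i, (j i - (n : ℤ)) % 2 = 0 ∧ j i ≠ (n : ℤ) ∧ j i ≠ -(n : ℤ)) then
      (V (s * n - j 0) * (∏ i : Fin k, V (j i.castSucc - j i.succ)) *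
          V (j (Fin.last k) + s * n)) /
        ∏ i : Fin (k + 1), ((n : ℂ) ^ 2 - (j i : ℂ) ^ 2 + z)
    else 0

open Finset Filter

section ProductSums

variable {ι : Type*} {w : ι → ℝ}

theorem sum_prod_le_tsum_pow (hw : 0 ≤ w) (hws : Summable w) {m : ℕ} (u : Finset (Fin m → ι)) :
    ∑ j ∈ u, ∏ i, w (j i) ≤ (∑' x, w x) ^ m := by
  classical
  set s := u.biUnion fun j => univ.image j
  calc ∑ j ∈ u, ∏ i, w (j i)
      ≤ ∑ j ∈ Fintype.piFinset fun _ => s, ∏ i, w (j i) := by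
        refine sum_le_sum_of_subset_of_nonneg (fun j hj => ?_)
          fun j _ _ => prod_nonneg fun i _ => hw (j i)
        simpa [s, Fintype.mem_piFinset] using fun i => ⟨j, hj, i, rfl⟩
    _ = (∑ x ∈ s, w x) ^ m := by simp [← prod_univ_sum]
    _ ≤ (∑' x, w x) ^ m :=
        pow_le_pow_left₀ (sum_nonneg fun x _ => hw x) (hws.sum_le_tsum s fun x _ => hw x) m

theorem norm_tsum_le_mul_tsum_pow {E : Type*} [SeminormedAddCommGroup E] {m : ℕ}
    {f : (Fin m → ι) → E} {C : ℝ} (hC : 0 ≤ C) (hw : 0 ≤ w) (hws : Summable w)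
    (hf : ∀ j, ‖f j‖ ≤ C * ∏ i, w (j i)) :
    ‖∑' j, f j‖ ≤ C * (∑' x, w x) ^ m := by
  have hprod : 0 ≤ fun j : Fin m → ι => ∏ i, w (j i) := fun j => prod_nonneg fun i _ => hw (j i)
  have hle := sum_prod_le_tsum_pow hw hws (m := m)
  have hsum := (summable_of_sum_le hprod hle).mul_left C
  have hnorm : Summable fun j => ‖f j‖ := hsum.of_nonneg_of_le (fun j => norm_nonneg _) hf
  calc ‖∑' j, f j‖ ≤ ∑' j, ‖f j‖ := norm_tsum_le_tsum_norm hnorm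
    _ ≤ ∑' j : Fin m → ι, C * ∏ i, w (j i) := hnorm.tsum_le_tsum hf hsum
    _ = C * ∑' j : Fin m → ι, ∏ i, w (j i) := tsum_mul_left
    _ ≤ C * (∑' x, w x) ^ m :=
        mul_le_mul_of_nonneg_left (Real.tsum_le_of_sum_le hprod hle) hC

end ProductSums

theorem sum_range_sub_shift_le {f : ℕ → ℝ} (hf : 0 ≤ f) (n M : ℕ) :
    ∑ m ∈ range M, (f m - f (m + n)) ≤ ∑ m ∈ range n, f m := by
  have : ∑ m ∈ range M, f m ≤ ∑ m ∈ range (n + M), f m :=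
    sum_le_sum_of_subset_of_nonneg (range_subset_range.2 (by omega)) fun i _ _ => hf i
  rw [sum_range_add] at this
  simp only [sum_sub_distrib, add_comm _ n]
  linarith

theorem inv_mul_le_inv_add_mul {a b : ℝ} (ha : 0 ≤ a) (hb : 0 ≤ b) :
    (a * b)⁻¹ ≤ (a + b)⁻¹ * (a⁻¹ + b⁻¹) := by
  rcases ha.eq_or_lt with rfl | ha
  · simp only [zero_mul, inv_zero, zero_add]
    positivity
  rcases hb.eq_or_lt with rfl | hb
  · simp only [mul_zero, inv_zero, add_zero]
    positivity
  field_simp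
  rw [add_comm]

theorem harmonic_eq_sum_range_inv (n : ℕ) :
    (harmonic n : ℝ) = ∑ m ∈ range n, ((m : ℝ) + 1)⁻¹ := by
  simp [harmonic]

theorem sum_range_inv_mul_add_le {n : ℕ} (hn : 0 < n) (M : ℕ) :
    ∑ m ∈ range M, (((m : ℝ) + 1) * ((m : ℝ) + 1 + n))⁻¹ ≤ harmonic n / n := by
  have hn' : (0 : ℝ) < n := by exact_mod_cast hn
  have hterm : ∀ m : ℕ, (((m : ℝ) + 1) * ((m : ℝ) + 1 + n))⁻¹
      = (((m : ℝ) + 1)⁻¹ - (((m + n : ℕ) : ℝ) + 1)⁻¹) / n := by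
    intro m
    push_cast
    field_simp
    ring
  simp_rw [hterm, ← sum_div, harmonic_eq_sum_range_inv]
  gcongr
  exact sum_range_sub_shift_le (f := fun m : ℕ => ((m : ℝ) + 1)⁻¹) (fun m => by positivity) n M

theorem sum_range_natCast_inv_le_harmonic (n : ℕ) :
    ∑ m ∈ range n, (m : ℝ)⁻¹ ≤ harmonic n := by
  have : ∑ m ∈ range (n + 1), (m : ℝ)⁻¹ = harmonic n := by
    simp [sum_range_succ', harmonic_eq_sum_range_inv]
  rw [← this, sum_range_succ]
  exact le_add_of_nonneg_right (by positivity)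

theorem sum_range_inv_mul_abs_sub_le {n : ℕ} :
    ∑ m ∈ range n, (((m : ℝ) + 1) * |(n : ℝ) - (m + 1)|)⁻¹ ≤ 2 * harmonic n / n := by
  have hterm : ∀ m ∈ range n, (((m : ℝ) + 1) * |(n : ℝ) - (m + 1)|)⁻¹
      ≤ (n : ℝ)⁻¹ * (((m : ℝ) + 1)⁻¹ + ((n - 1 - m : ℕ) : ℝ)⁻¹) := by
    intro m hm
    have hcast : ((n - 1 - m : ℕ) : ℝ) = n - (m + 1) := by
      rw [Nat.cast_sub (by simp at hm; omega), Nat.cast_sub (by simp at hm; omega)]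
      ring
    have hpos : (0 : ℝ) ≤ n - (m + 1) := by rw [← hcast]; positivity
    rw [hcast, abs_of_nonneg hpos]
    convert inv_mul_le_inv_add_mul (by positivity : (0 : ℝ) ≤ m + 1) hpos using 3
    ring
  calc _ ≤ ∑ m ∈ range n, (n : ℝ)⁻¹ * (((m : ℝ) + 1)⁻¹ + ((n - 1 - m : ℕ) : ℝ)⁻¹) :=
        sum_le_sum hterm
    _ = (harmonic n + ∑ m ∈ range n, (m : ℝ)⁻¹) / n := by
        rw [← mul_sum, sum_add_distrib, sum_range_reflect (fun m => (m : ℝ)⁻¹),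
          harmonic_eq_sum_range_inv, inv_mul_eq_div]
    _ ≤ 2 * harmonic n / n := by
        gcongr
        linarith [sum_range_natCast_inv_le_harmonic n]

section GapSum

variable {n : ℕ}

theorem sum_range_inv_abs_mul_abs_add_natCast_le (hn : 0 < n) (M : ℕ) :
    ∑ m ∈ range M, (|((m : ℤ) : ℝ)| * |((m : ℤ) : ℝ) + n|)⁻¹ ≤ harmonic n / n := by
  calc _ ≤ ∑ m ∈ range (M + 1), (|((m : ℤ) : ℝ)| * |((m : ℤ) : ℝ) + n|)⁻¹ :=
        sum_le_sum_of_subset_of_nonneg (range_subset_range.2 (by omega)) fun _ _ _ => by positivity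
    _ = ∑ m ∈ range M, (((m : ℝ) + 1) * ((m : ℝ) + 1 + n))⁻¹ := by
        rw [sum_range_succ']
        push_cast
        simp only [abs_zero, zero_mul, inv_zero, add_zero]
        refine sum_congr rfl fun m _ => ?_
        rw [abs_of_nonneg (by positivity), abs_of_nonneg (by positivity)]
    _ ≤ harmonic n / n := sum_range_inv_mul_add_le hn M

theorem sum_range_inv_abs_mul_abs_add_neg_le (hn : 0 < n) (M : ℕ) :
    ∑ m ∈ range M, (|((-(m + 1) : ℤ) : ℝ)| * |((-(m + 1) : ℤ) : ℝ) + n|)⁻¹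
      ≤ 3 * harmonic n / n := by
  -- `t ↦ -n - t` maps the terms with `t < -n` onto those with `t > 0`.
  calc _ ≤ ∑ m ∈ range (n + M), (|((-(m + 1) : ℤ) : ℝ)| * |((-(m + 1) : ℤ) : ℝ) + n|)⁻¹ :=
        sum_le_sum_of_subset_of_nonneg (range_subset_range.2 (by omega)) fun _ _ _ => by positivity
    _ = ∑ m ∈ range n, (((m : ℝ) + 1) * |(n : ℝ) - (m + 1)|)⁻¹
          + ∑ m ∈ range M, (((m : ℝ) + 1) * ((m : ℝ) + 1 + n))⁻¹ := by
        rw [sum_range_add]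
        push_cast
        congr 1 <;> refine sum_congr rfl fun m _ => ?_
        · rw [abs_neg, abs_of_nonneg (by positivity), neg_add_eq_sub]
        · rw [abs_neg, abs_of_nonneg (by positivity), mul_comm,
            show -((n : ℝ) + m + 1) + n = -(m + 1) by ring, abs_neg, abs_of_nonneg (by positivity)]
          ring
    _ ≤ 2 * harmonic n / n + harmonic n / n :=
        add_le_add sum_range_inv_mul_abs_sub_le (sum_range_inv_mul_add_le hn M)
    _ = 3 * harmonic n / n := by ring

theorem summable_inv_abs_mul_abs_add (hn : 0 < n) :
    Summable fun t : ℤ => (|(t : ℝ)| * |(t : ℝ) + n|)⁻¹ :=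
  .of_nat_of_neg_add_one
    (summable_of_sum_range_le (fun _ => by positivity)
      (sum_range_inv_abs_mul_abs_add_natCast_le hn))
    (summable_of_sum_range_le (fun _ => by positivity) (sum_range_inv_abs_mul_abs_add_neg_le hn))

theorem tsum_inv_abs_mul_abs_add_le (hn : 0 < n) :
    ∑' t : ℤ, (|(t : ℝ)| * |(t : ℝ) + n|)⁻¹ ≤ 4 * harmonic n / n := by
  have hnat := sum_range_inv_abs_mul_abs_add_natCast_le hn
  have hneg := sum_range_inv_abs_mul_abs_add_neg_le hn
  rw [tsum_of_nat_of_neg_add_one (summable_of_sum_range_le (fun _ => by positivity) hnat)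
    (summable_of_sum_range_le (fun _ => by positivity) hneg)]
  calc _ ≤ (harmonic n : ℝ) / n + 3 * harmonic n / n :=
        add_le_add (Real.tsum_le_of_sum_range_le (fun _ => by positivity) hnat)
          (Real.tsum_le_of_sum_range_le (fun _ => by positivity) hneg)
    _ = 4 * harmonic n / n := by ring

end GapSum

/-- The summation conditions `j ≠ ±n` are built in through `0⁻¹ = 0`. -/
noncomputable def hillWeight (n : ℕ) (j : ℤ) : ℝ :=
  if (j - n) % 2 = 0 then |(n : ℝ) ^ 2 - (j : ℝ) ^ 2|⁻¹ else 0

section HillWeight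

variable {n : ℕ}

theorem hillWeight_nonneg : 0 ≤ hillWeight n := fun j => by
  unfold hillWeight
  split_ifs <;> positivity

theorem hillWeight_add_two_mul (t : ℤ) :
    hillWeight n (n + 2 * t) = 4⁻¹ * (|(t : ℝ)| * |(t : ℝ) + n|)⁻¹ := by
  rw [hillWeight, if_pos (by omega), ← mul_inv]
  push_cast
  rw [show (n : ℝ) ^ 2 - (n + 2 * t) ^ 2 = -(4 * (t * (t + n))) by ring, abs_neg, abs_mul,
    abs_mul, abs_of_pos (by norm_num : (0 : ℝ) < 4)]

theorem support_hillWeight_subset :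
    Function.support (hillWeight n) ⊆ Set.range fun t : ℤ => (n : ℤ) + 2 * t := by
  intro j hj
  by_contra hrange
  exact hj (if_neg fun hpar => hrange ⟨(j - n) / 2, by dsimp only; omega⟩)

theorem injective_add_two_mul (m : ℤ) : Function.Injective fun t : ℤ => m + 2 * t :=
  (add_right_injective m).comp (mul_right_injective₀ two_ne_zero)

theorem summable_hillWeight (hn : 0 < n) : Summable (hillWeight n) := by
  rw [← (injective_add_two_mul n).summable_iff fun j hj =>
    Function.notMem_support.1 fun h => hj (support_hillWeight_subset h)]
  simpa only [Function.comp_def, hillWeight_add_two_mul] using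
    (summable_inv_abs_mul_abs_add hn).mul_left _

theorem tsum_hillWeight_le (hn : 3 ≤ n) : ∑' j, hillWeight n j ≤ 2 * Real.log n / n := by
  have hlog : 1 ≤ Real.log n := by
    have : (3 : ℝ) ≤ n := by exact_mod_cast hn
    linarith [Real.log_three_gt_d9, Real.log_le_log (by norm_num) this]
  calc ∑' j, hillWeight n j = 4⁻¹ * ∑' t : ℤ, (|(t : ℝ)| * |(t : ℝ) + n|)⁻¹ := by
        rw [← (injective_add_two_mul n).tsum_eq support_hillWeight_subset, ← tsum_mul_left]
        simp only [hillWeight_add_two_mul]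
    _ ≤ 4⁻¹ * (4 * harmonic n / n) := by gcongr; exact tsum_inv_abs_mul_abs_add_le (by omega)
    _ ≤ (1 + Real.log n) / n := by
        rw [← mul_div_assoc, inv_mul_cancel_left₀ four_ne_zero]
        gcongr
        exact harmonic_le_one_add_log n
    _ ≤ 2 * Real.log n / n := by gcongr; linarith

end HillWeight

theorem two_mul_abs_le_abs_sq_sub_sq {n j : ℤ} (hpar : (j - n) % 2 = 0) (h₁ : j ≠ n)
    (h₂ : j ≠ -n) : 2 * |n| ≤ |n ^ 2 - j ^ 2| := by
  obtain ⟨t, rfl⟩ : ∃ t, j = n + 2 * t := ⟨(j - n) / 2, by omega⟩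
  have ht : 1 ≤ |t| := Int.one_le_abs (by omega)
  have htn : 1 ≤ |t + n| := Int.one_le_abs (by omega)
  have hn : |n| ≤ |t + n| + |t| := by simpa using abs_sub (t + n) t
  rw [show n ^ 2 - (n + 2 * t) ^ 2 = -(4 * (t * (t + n))) by ring, abs_neg, abs_mul, abs_mul]
  norm_num
  nlinarith

theorem two_mul_le_abs_natCast_sq_sub_sq {n : ℕ} {j : ℤ} (hpar : (j - n) % 2 = 0) (h₁ : j ≠ n)
    (h₂ : j ≠ -n) : 2 * (n : ℝ) ≤ |(n : ℝ) ^ 2 - (j : ℝ) ^ 2| := by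
  exact_mod_cast two_mul_abs_le_abs_sq_sub_sq hpar h₁ h₂

theorem abs_sq_sub_sq_div_two_le_norm {n : ℕ} {j : ℤ} {z : ℂ} (hz : ‖z‖ < n / 2)
    (hpar : (j - n) % 2 = 0) (h₁ : j ≠ n) (h₂ : j ≠ -n) :
    |(n : ℝ) ^ 2 - (j : ℝ) ^ 2| / 2 ≤ ‖(n : ℂ) ^ 2 - (j : ℂ) ^ 2 + z‖ := by
  have hgap := two_mul_le_abs_natCast_sq_sub_sq hpar h₁ h₂
  have htri := norm_sub_norm_le (((n : ℝ) ^ 2 - (j : ℝ) ^ 2 : ℝ) : ℂ) (-z)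
  rw [Complex.norm_real, Real.norm_eq_abs, norm_neg, sub_neg_eq_add] at htri
  push_cast at htri
  linarith

theorem norm_div_prod_le {𝕜 ι : Type*} [NormedField 𝕜] [Fintype ι] {a : 𝕜} {d : ι → 𝕜}
    {x : ι → ℝ} {B : ℝ} (ha : ‖a‖ ≤ B) (hx : ∀ i, 0 < x i) (hd : ∀ i, x i / 2 ≤ ‖d i‖) :
    ‖a / ∏ i, d i‖ ≤ B * ∏ i, 2 * (x i)⁻¹ := by
  have hprod : ∏ i, x i / 2 ≤ ‖∏ i, d i‖ := by
    rw [norm_prod]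
    exact prod_le_prod (fun i _ => by linarith [hx i]) fun i _ => hd i
  rw [norm_div]
  calc ‖a‖ / ‖∏ i, d i‖ ≤ B / ∏ i, x i / 2 :=
        div_le_div₀ ((norm_nonneg a).trans ha) ha (prod_pos fun i _ => by linarith [hx i]) hprod
    _ = B * ∏ i, 2 * (x i)⁻¹ := by
        rw [div_eq_mul_inv, ← prod_inv_distrib]
        simp_rw [inv_div, div_eq_mul_inv]

theorem tsum_le_two_mul_of_le_geometric {a : ℕ → ℝ} {c x : ℝ} (hx₀ : 0 ≤ x) (hx : x ≤ 1 / 2)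
    (ha₀ : ∀ k, 0 ≤ a k) (ha : ∀ k, a k ≤ c * x ^ k) : ∑' k, a k ≤ 2 * c := by
  have hgeo : Summable fun k => c * x ^ k :=
    (summable_geometric_of_lt_one hx₀ (by linarith)).mul_left c
  have hc : 0 ≤ c := by simpa using (ha₀ 0).trans (ha 0)
  calc ∑' k, a k ≤ ∑' k, c * x ^ k := (hgeo.of_nonneg_of_le ha₀ ha).tsum_le_tsum ha hgeo
    _ = c * (1 - x)⁻¹ := by rw [tsum_mul_left, tsum_geometric_of_lt_one hx₀ (by linarith)]
    _ ≤ c * 2 := by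
        gcongr
        rw [inv_le_comm₀ (by linarith) two_pos]
        linarith
    _ = 2 * c := mul_comm c 2

section Hill

variable {A : ℝ} {V : ℤ → ℂ} {n : ℕ} {z : ℂ} {s : ℤ}

theorem norm_hillS_numerator_le (hA : 0 ≤ A) (hV : ∀ k : ℤ, k % 2 = 0 → ‖V k‖ ≤ A)
    (hs : s = 1 ∨ s = -1) {k : ℕ} {j : Fin (k + 1) → ℤ} (hj : ∀ i, (j i - n) % 2 = 0) :
    ‖V (s * n - j 0) * (∏ i : Fin k, V (j i.castSucc - j i.succ)) * V (j (Fin.last k) + s * n)‖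
      ≤ A ^ (k + 2) := by
  have hfirst : ‖V (s * n - j 0)‖ ≤ A :=
    hV _ (by rcases hs with rfl | rfl <;> have := hj 0 <;> omega)
  have hlast : ‖V (j (Fin.last k) + s * n)‖ ≤ A :=
    hV _ (by rcases hs with rfl | rfl <;> have := hj (Fin.last k) <;> omega)
  have hmiddle : ‖∏ i : Fin k, V (j i.castSucc - j i.succ)‖ ≤ A ^ k := by
    rw [norm_prod]
    calc _ ≤ ∏ _i : Fin k, A := prod_le_prod (fun _ _ => norm_nonneg _) fun i _ =>
          hV _ (by have := hj i.castSucc; have := hj i.succ; omega)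
      _ = A ^ k := by simp
  rw [norm_mul, norm_mul]
  calc _ ≤ A * A ^ k * A := by gcongr
    _ = A ^ (k + 2) := by ring

theorem norm_hillS_le_mul_tsum_pow (hA : 0 ≤ A) (hV : ∀ k : ℤ, k % 2 = 0 → ‖V k‖ ≤ A)
    (hn : 0 < n) (hz : ‖z‖ < n / 2) (hs : s = 1 ∨ s = -1) (k : ℕ) :
    ‖hillS V n z s k‖ ≤ A ^ (k + 2) * (∑' j, 2 * hillWeight n j) ^ (k + 1) := by
  have hweight : 0 ≤ fun j => 2 * hillWeight n j :=
    fun j => mul_nonneg zero_le_two (hillWeight_nonneg j)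
  refine norm_tsum_le_mul_tsum_pow (pow_nonneg hA _) hweight
    ((summable_hillWeight hn).mul_left 2) fun j => ?_
  split_ifs with hj
  · have hweight_eq : ∀ i, hillWeight n (j i) = |(n : ℝ) ^ 2 - (j i : ℝ) ^ 2|⁻¹ :=
      fun i => if_pos (hj i).1
    simp only [hweight_eq]
    refine norm_div_prod_le (norm_hillS_numerator_le hA hV hs fun i => (hj i).1) (fun i => ?_)
      fun i => abs_sq_sub_sq_div_two_le_norm hz (hj i).1 (hj i).2.1 (hj i).2.2
    have := two_mul_le_abs_natCast_sq_sub_sq (hj i).1 (hj i).2.1 (hj i).2.2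
    have : (0 : ℝ) < n := by exact_mod_cast hn
    linarith
  · simpa using mul_nonneg (pow_nonneg hA _) (prod_nonneg fun i _ => hweight (j i))

theorem norm_hillS_le (hA : 0 ≤ A) (hV : ∀ k : ℤ, k % 2 = 0 → ‖V k‖ ≤ A) (hn : 3 ≤ n)
    (hz : ‖z‖ < n / 2) (hs : s = 1 ∨ s = -1) (k : ℕ) :
    ‖hillS V n z s k‖ ≤ (4 * A) ^ (k + 2) * (Real.log n / n) ^ (k + 1) := by
  have hlog : 0 ≤ Real.log n := Real.log_natCast_nonneg n
  calc ‖hillS V n z s k‖ ≤ A ^ (k + 2) * (∑' j, 2 * hillWeight n j) ^ (k + 1) :=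
        norm_hillS_le_mul_tsum_pow hA hV (by omega) hz hs k
    _ ≤ A ^ (k + 2) * (2 * (2 * Real.log n / n)) ^ (k + 1) := by
        rw [tsum_mul_left]
        gcongr
        · exact mul_nonneg zero_le_two (tsum_nonneg hillWeight_nonneg)
        · exact tsum_hillWeight_le hn
    _ ≤ 4 * (A ^ (k + 2) * (2 * (2 * Real.log n / n)) ^ (k + 1)) :=
        le_mul_of_one_le_left (by positivity) (by norm_num)
    _ = (4 * A) ^ (k + 2) * (Real.log n / n) ^ (k + 1) := by ring

theorem tsum_norm_hillS_le (hA : 0 ≤ A) (hV : ∀ k : ℤ, k % 2 = 0 → ‖V k‖ ≤ A) (hn : 3 ≤ n)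
    (hz : ‖z‖ < n / 2) (hs : s = 1 ∨ s = -1) (hsmall : 4 * A * (Real.log n / n) ≤ 1 / 2) :
    ∑' k, ‖hillS V n z s k‖ ≤ 32 * A ^ 2 * Real.log n / n := by
  have : 0 ≤ Real.log n := Real.log_natCast_nonneg n
  calc _ ≤ 2 * ((4 * A) ^ 2 * (Real.log n / n)) :=
        tsum_le_two_mul_of_le_geometric (by positivity) hsmall (fun _ => norm_nonneg _)
          fun k => (norm_hillS_le hA hV hn hz hs k).trans_eq (by ring)
    _ = 32 * A ^ 2 * Real.log n / n := by ring

end Hill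

theorem stmt7 (A : ℝ) (hA : 0 < A) (V : ℤ → ℂ)
    (hV : ∀ k : ℤ, k % 2 = 0 → 1 / A ≤ ‖V k‖ ∧ ‖V k‖ ≤ A) :
    (∀ n : ℕ, 3 ≤ n → ∀ z : ℂ, ‖z‖ < (n : ℝ) / 2 → ∀ s : ℤ, s = 1 ∨ s = -1 →
      ∀ k : ℕ, ‖hillS V n z s k‖ ≤ (4 * A) ^ (k + 2) * (Real.log n / n) ^ (k + 1)) ∧
    (∃ C : ℝ, 0 < C ∧ ∃ N : ℕ, ∀ n : ℕ, N ≤ n → ∀ z : ℂ, ‖z‖ < (n : ℝ) / 2 →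
      ∀ s : ℤ, s = 1 ∨ s = -1 →
      ∑' k : ℕ, ‖hillS V n z s k‖ ≤ C * Real.log n / n) := by
  have hV' : ∀ k : ℤ, k % 2 = 0 → ‖V k‖ ≤ A := fun k hk => (hV k hk).2
  refine ⟨fun n hn z hz s hs k => norm_hillS_le hA.le hV' hn hz hs k, 32 * A ^ 2, by positivity, ?_⟩
  have hlim : Tendsto (fun n : ℕ => 4 * A * (Real.log n / n)) atTop (nhds 0) := by
    simpa using ((Real.tendsto_pow_log_div_mul_add_atTop 1 0 1 one_ne_zero).comp
      tendsto_natCast_atTop_atTop).const_mul (4 * A)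
  obtain ⟨N, hN⟩ := eventually_atTop.1
    ((hlim.eventually (ge_mem_nhds (by norm_num : (0 : ℝ) < 1 / 2))).and (eventually_ge_atTop 3))
  exact ⟨N, fun n hn z hz s hs => tsum_norm_hillS_le hA.le hV' (hN n hn).2 hz hs (hN n hn).1⟩
end

section
/- Suppose (βₙ^±) are analytic functions on a disc with |∂βₙ^±/∂z(z)| ≤ εₙ on the segment [zₙ⁻, zₙ⁺], where εₙ → 0, and suppose |γₙ| ≤ 2(|βₙ⁻(zₙ*)| + |βₙ⁺(zₙ*)|) with zₙ* the midpoint of [zₙ⁻, zₙ⁺] and |γₙ| = |zₙ⁺ − zₙ⁻|. If t_{n_k}(z_{n_k}*) := |β⁻_{n_k}(z_{n_k}*)|/|β⁺_{n_k}(z_{n_k}*)| → 0 along a subsequence, then there exist ηₖ → 0 such that for all z in the segment [z_{n_k}⁻, z_{n_k}⁺], |β⁻_{n_k}(z)|/|β⁺_{n_k}(z)| ≤ ηₖ; in fact one may take ηₖ = (4ε_{n_k} + t_{n_k}(z_{n_k}*))/(1 − 4ε_{n_k}). -/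
/-!
Once `t = |β⁻(z*)| / |β⁺(z*)| < 1`, the hypothesis on `γ` gives `|γ| ≤ 4 |β⁺(z*)|`, so on the
segment both `β⁻` and `β⁺` move by at most `4ε |β⁺(z*)|` from their midpoint values. Hence
`|β⁻(z)| ≤ (4ε + t) |β⁺(z*)|` and `|β⁺(z)| ≥ (1 - 4ε) |β⁺(z*)|`, and the ratio bound
`η = (4ε + t) / (1 - 4ε)` tends to `0` with `ε` and `t`.
-/

open Filter Topology

theorem norm_le_mul_norm_of_norm_sub_le {F : Type*} [SeminormedAddCommGroup F]
    {u v u₀ v₀ : F} {c : ℝ} (hc : c < 1) (hv₀ : 0 < ‖v₀‖)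
    (hu : ‖u - u₀‖ ≤ c * ‖v₀‖) (hv : ‖v - v₀‖ ≤ c * ‖v₀‖) :
    ‖u‖ ≤ (c + ‖u₀‖ / ‖v₀‖) / (1 - c) * ‖v‖ := by
  have hc0 : 0 ≤ c := nonneg_of_mul_nonneg_left ((norm_nonneg _).trans hu) hv₀
  have hu_le : ‖u‖ ≤ (c + ‖u₀‖ / ‖v₀‖) * ‖v₀‖ := by
    rw [add_mul, div_mul_cancel₀ _ hv₀.ne']
    linarith [norm_sub_norm_le u u₀]
  have hv_ge : (1 - c) * ‖v₀‖ ≤ ‖v‖ := by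
    linarith [norm_sub_norm_le v₀ v, norm_sub_rev v₀ v]
  calc ‖u‖ ≤ (c + ‖u₀‖ / ‖v₀‖) / (1 - c) * ((1 - c) * ‖v₀‖) := by
        rwa [← mul_assoc, div_mul_cancel₀ _ (sub_ne_zero.mpr hc.ne')]
    _ ≤ (c + ‖u₀‖ / ‖v₀‖) / (1 - c) * ‖v‖ := by
        gcongr

theorem tendsto_four_mul_add_div_one_sub_four_mul {ι : Type*} {l : Filter ι} {e t : ι → ℝ}
    (he : Tendsto e l (𝓝 0)) (ht : Tendsto t l (𝓝 0)) :
    Tendsto (fun k => (4 * e k + t k) / (1 - 4 * e k)) l (𝓝 0) := by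
  have hnum : Tendsto (fun k => 4 * e k + t k) l (𝓝 (4 * 0 + 0)) := (he.const_mul 4).add ht
  have hden : Tendsto (fun k => 1 - 4 * e k) l (𝓝 (1 - 4 * 0)) := (he.const_mul 4).const_sub 1
  rw [show (0 : ℝ) = (4 * 0 + 0) / (1 - 4 * 0) by norm_num]
  exact hnum.div hden (by norm_num)

theorem stmt11 (βp βm : ℕ → ℂ → ℂ) (zm zp : ℕ → ℂ) (ε : ℕ → ℝ)
    (hε0 : ∀ n, 0 < ε n) (hεlim : Filter.Tendsto ε Filter.atTop (nhds 0))
    (hlip : ∀ n, ∀ z ∈ segment ℝ (zm n) (zp n),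
      norm (βp n z - βp n ((zm n + zp n) / 2)) ≤ ε n * norm (zp n - zm n) ∧
      norm (βm n z - βm n ((zm n + zp n) / 2)) ≤ ε n * norm (zp n - zm n))
    (hγ : ∀ n, norm (zp n - zm n) ≤
      2 * (norm (βm n ((zm n + zp n) / 2)) + norm (βp n ((zm n + zp n) / 2))))
    (nk : ℕ → ℕ) (hnk : StrictMono nk)
    (hne : ∀ᶠ k in Filter.atTop, βp (nk k) ((zm (nk k) + zp (nk k)) / 2) ≠ 0)
    (ht : Filter.Tendsto (fun k =>
        norm (βm (nk k) ((zm (nk k) + zp (nk k)) / 2)) /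
          norm (βp (nk k) ((zm (nk k) + zp (nk k)) / 2)))
      Filter.atTop (nhds 0)) :
    ∃ η : ℕ → ℝ, Filter.Tendsto η Filter.atTop (nhds 0) ∧
      ∀ᶠ k in Filter.atTop, ∀ z ∈ segment ℝ (zm (nk k)) (zp (nk k)),
        norm (βm (nk k) z) ≤ η k * norm (βp (nk k) z) := by
  have hεk : Tendsto (fun k => ε (nk k)) atTop (𝓝 0) := hεlim.comp hnk.tendsto_atTop
  refine ⟨_, tendsto_four_mul_add_div_one_sub_four_mul hεk ht, ?_⟩
  filter_upwards [hεk.eventually (gt_mem_nhds (by norm_num : (0 : ℝ) < 1 / 4)),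
    ht.eventually (gt_mem_nhds one_pos), hne] with k hε_small ht_small hβp z hz
  set n := nk k
  set zs := (zm n + zp n) / 2
  have hb : 0 < ‖βp n zs‖ := norm_pos_iff.mpr hβp
  have hab : ‖βm n zs‖ < ‖βp n zs‖ := (div_lt_one hb).mp ht_small
  have hδ : ε n * ‖zp n - zm n‖ ≤ 4 * ε n * ‖βp n zs‖ := by
    nlinarith [hγ n, hε0 n]
  obtain ⟨hp, hm⟩ := hlip n z hz
  exact norm_le_mul_norm_of_norm_sub_le (by linarith) hb (hm.trans hδ) (hp.trans hδ)
end

section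
/- Let α, β⁺, β⁻ be analytic functions on the closed disc {|z| ≤ R} such that sup_{|z|=R} |α(z)|/R < 1/3 and sup_{|z|=R} |β^±(z)|/R < 1/3. Then the equation (z − α(z))² = β⁺(z)β⁻(z) has exactly two roots (counted with multiplicity) in the open disc {|z| < R}. -/
/-!
On `|z| = R` the hypotheses give `|F z - z²| < |z|²` for `F z = (z - α z)² - β⁺ z β⁻ z`, so `F / z²`
stays in the right half-plane and `log (F / z²)` is a primitive of `F'/F - 2/z` on the circle:
`∮ F'/F = 2 · 2πi` (Rouché). By the argument principle this integral is `2πi` times the number of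
zeros in the disc counted with multiplicity, and dividing out a zero `w` (replacing `F` by
`dslope F w`) lowers it by `2πi`. Dividing out two zeros therefore leaves a function without zeros.
-/

open Metric Set Complex
open scoped Real

namespace AnalyticOnNhd

variable {𝕜 E : Type*} [NontriviallyNormedField 𝕜] [NormedAddCommGroup E] [NormedSpace 𝕜 E]
  {f : 𝕜 → E} {s : Set 𝕜}

theorem dslope (hf : AnalyticOnNhd 𝕜 f s) (a : 𝕜) : AnalyticOnNhd 𝕜 (dslope f a) s := by
  intro z hz
  rcases eq_or_ne z a with rfl | hza
  · obtain ⟨p, hp⟩ := hf z hz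
    exact ⟨p.fslope, hp.has_fpower_series_dslope_fslope⟩
  · have hslope : AnalyticAt 𝕜 (fun y ↦ (y - a)⁻¹ • (f y - f a)) z :=
      ((analyticAt_id.sub analyticAt_const).inv (sub_ne_zero.2 hza)).smul
        ((hf z hz).sub analyticAt_const)
    refine hslope.congr ?_
    filter_upwards [eventually_ne_nhds hza] with y hy
    rw [dslope_of_ne _ hy, slope_def_module]

theorem finite_zeros_of_isCompact (hf : AnalyticOnNhd 𝕜 f s) (hs : IsCompact s)
    (hs' : IsConnected s) {x : 𝕜} (hx : x ∈ s) (hfx : f x ≠ 0) :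
    {z ∈ s | f z = 0}.Finite := by
  convert hs.finite_sdiff_of_mem_codiscreteWithin (hf.preimage_zero_mem_codiscreteWithin hfx hx hs')
    using 1
  ext z
  simp

end AnalyticOnNhd

theorem sub_mul_dslope_of_eq_zero {G : ℂ → ℂ} {w : ℂ} (hGw : G w = 0) (z : ℂ) :
    (z - w) * dslope G w z = G z := by
  simpa [hGw] using sub_smul_dslope G w z

theorem apply_eq_zero_of_dslope_eq_zero {G : ℂ → ℂ} {w z : ℂ} (hGw : G w = 0)
    (h : dslope G w z = 0) : G z = 0 := by
  rw [← sub_mul_dslope_of_eq_zero hGw, h, mul_zero]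

section CircleIntegral

variable {c w : ℂ} {R : ℝ} {G H : ℂ → ℂ}

theorem circleIntegrable_logDeriv (hR : 0 ≤ R) (hG : AnalyticOnNhd ℂ G (sphere c R))
    (hG0 : ∀ z ∈ sphere c R, G z ≠ 0) : CircleIntegrable (logDeriv G) c R :=
  (hG.deriv.continuousOn.div hG.continuousOn hG0).circleIntegrable hR

theorem circleIntegral_logDeriv_eq_zero (hR : 0 ≤ R) (hG : AnalyticOnNhd ℂ G (closedBall c R))
    (hG0 : ∀ z ∈ closedBall c R, G z ≠ 0) : ∮ z in C(c, R), logDeriv G z = 0 := by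
  have hlog : AnalyticOnNhd ℂ (logDeriv G) (closedBall c R) := fun z hz ↦
    (hG.deriv z hz).div (hG z hz) (hG0 z hz)
  exact circleIntegral_eq_zero_of_differentiable_on_off_countable hR countable_empty
    hlog.continuousOn fun z hz ↦ (hlog z (ball_subset_closedBall hz.1)).differentiableAt

theorem circleIntegral_logDeriv_pow (hR : 0 < R) (n : ℕ) :
    ∮ z in C(0, R), logDeriv (· ^ n) z = n * (2 * π * I) := by
  have hinv := circleIntegral.integral_sub_inv_of_mem_ball (mem_ball_self (x := (0 : ℂ)) hR)
  simp_rw [sub_zero] at hinv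
  simp_rw [logDeriv_pow, div_eq_mul_inv, circleIntegral.integral_const_mul, hinv]

theorem circleIntegral_logDeriv_eq_of_norm_sub_lt (hR : 0 ≤ R)
    (hG : AnalyticOnNhd ℂ G (sphere c R)) (hH : AnalyticOnNhd ℂ H (sphere c R))
    (hlt : ∀ z ∈ sphere c R, ‖G z - H z‖ < ‖H z‖) :
    ∮ z in C(c, R), logDeriv G z = ∮ z in C(c, R), logDeriv H z := by
  have hH0 : ∀ z ∈ sphere c R, H z ≠ 0 := fun z hz h ↦
    (norm_nonneg _).not_gt (by simpa [h] using hlt z hz)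
  have hG0 : ∀ z ∈ sphere c R, G z ≠ 0 := fun z hz h ↦ by simpa [h] using hlt z hz
  have hprim : ∀ z ∈ sphere c R, HasDerivWithinAt (fun y ↦ log (G y / H y))
      (logDeriv G z - logDeriv H z) (sphere c R) z := by
    intro z hz
    have hslit : G z / H z ∈ slitPlane := by
      have h1 : ‖G z / H z - 1‖ < 1 := by
        rw [div_sub_one (hH0 z hz), norm_div, div_lt_one (norm_pos_iff.2 (hH0 z hz))]
        exact hlt z hz
      simpa using mem_slitPlane_of_norm_lt_one h1
    have hderiv : HasDerivAt (fun y ↦ log (G y / H y)) (logDeriv (fun y ↦ G y / H y) z) z :=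
      ((hG z hz).div (hH z hz) (hH0 z hz)).differentiableAt.hasDerivAt.clog hslit
    rw [logDeriv_div z (hG0 z hz) (hH0 z hz) (hG z hz).differentiableAt
      (hH z hz).differentiableAt] at hderiv
    exact hderiv.hasDerivWithinAt
  rw [← sub_eq_zero, ← circleIntegral.integral_sub (circleIntegrable_logDeriv hR hG hG0)
    (circleIntegrable_logDeriv hR hH hH0)]
  exact circleIntegral.integral_eq_zero_of_hasDerivWithinAt hR hprim

theorem circleIntegral_logDeriv_eq_add_dslope (hG : AnalyticOnNhd ℂ G (sphere c R))
    (hG0 : ∀ z ∈ sphere c R, G z ≠ 0) (hw : w ∈ ball c R) (hGw : G w = 0) :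
    ∮ z in C(c, R), logDeriv G z = 2 * π * I + ∮ z in C(c, R), logDeriv (dslope G w) z := by
  have hR : 0 ≤ R := (pos_of_mem_ball hw).le
  have hw' : ∀ z ∈ sphere c R, z - w ≠ 0 := fun z hz h ↦
    sphere_disjoint_ball.ne_of_mem hz hw (sub_eq_zero.1 h)
  have hG₁ := hG.dslope w
  have hG₁0 : ∀ z ∈ sphere c R, dslope G w z ≠ 0 := fun z hz h ↦
    hG0 z hz (apply_eq_zero_of_dslope_eq_zero hGw h)
  have hsplit : EqOn (logDeriv G) (fun z ↦ (z - w)⁻¹ + logDeriv (dslope G w) z) (sphere c R) := by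
    intro z hz
    conv_lhs => rw [← funext (sub_mul_dslope_of_eq_zero hGw)]
    rw [logDeriv_mul z (hw' z hz) (hG₁0 z hz) (by fun_prop) (hG₁ z hz).differentiableAt]
    simp [logDeriv_apply]
  have hinv : CircleIntegrable (fun z ↦ (z - w)⁻¹) c R :=
    (ContinuousOn.inv₀ (by fun_prop) hw').circleIntegrable hR
  rw [circleIntegral.integral_congr hR hsplit, circleIntegral.integral_add hinv
    (circleIntegrable_logDeriv hR hG₁ hG₁0), circleIntegral.integral_sub_inv_of_mem_ball hw]

theorem analyticOrderAt_ne_top_of_sphere (hR : 0 ≤ R) (hG : AnalyticOnNhd ℂ G (closedBall c R))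
    (hG0 : ∀ z ∈ sphere c R, G z ≠ 0) {u : ℂ} (hu : u ∈ closedBall c R) :
    analyticOrderAt G u ≠ ⊤ := by
  obtain ⟨x, hx⟩ := NormedSpace.sphere_nonempty (x := c).2 hR
  refine hG.analyticOrderAt_ne_top_of_isPreconnected (convex_closedBall c R).isPreconnected
    (sphere_subset_closedBall hx) hu ?_
  rw [((hG x (sphere_subset_closedBall hx)).analyticOrderAt_eq_zero).2 (hG0 x hx)]
  exact ENat.zero_ne_top

theorem analyticOrderNatAt_ne_zero_of_sphere (hR : 0 ≤ R)
    (hG : AnalyticOnNhd ℂ G (closedBall c R)) (hG0 : ∀ z ∈ sphere c R, G z ≠ 0) {u : ℂ}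
    (hu : u ∈ closedBall c R) (hGu : G u = 0) : analyticOrderNatAt G u ≠ 0 := by
  rw [analyticOrderNatAt, Ne, ENat.toNat_eq_zero, not_or]
  exact ⟨(hG u hu).analyticOrderAt_ne_zero.2 hGu, analyticOrderAt_ne_top_of_sphere hR hG hG0 hu⟩

theorem circleIntegral_logDeriv_eq_sum_analyticOrderNatAt (hR : 0 < R) {S : Finset ℂ}
    (hS : ↑S ⊆ closedBall c R) (hG : AnalyticOnNhd ℂ G (closedBall c R))
    (hG0 : ∀ z ∈ sphere c R, G z ≠ 0) (hzero : ∀ z ∈ closedBall c R, G z = 0 → z ∈ S) :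
    ∮ z in C(c, R), logDeriv G z = (∑ v ∈ S, analyticOrderNatAt G v) * (2 * π * I) := by
  induction h : ∑ v ∈ S, analyticOrderNatAt G v generalizing G with
  | zero =>
    rw [Nat.cast_zero, zero_mul]
    refine circleIntegral_logDeriv_eq_zero hR.le hG fun z hz hGz ↦ ?_
    exact analyticOrderNatAt_ne_zero_of_sphere hR.le hG hG0 hz hGz
      (Finset.sum_eq_zero_iff.1 h z (hzero z hz hGz))
  | succ N ih =>
    obtain ⟨v, hvS, hv⟩ := Finset.exists_ne_zero_of_sum_ne_zero (by rw [h]; exact N.succ_ne_zero)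
    have hGv : G v = 0 := apply_eq_zero_of_analyticOrderNatAt_ne_zero hv
    have hvb : v ∈ ball c R := by
      rw [← closedBall_sdiff_sphere]
      exact ⟨hS hvS, fun hs ↦ hG0 v hs hGv⟩
    have hG₁ := hG.dslope v
    have hG₁0 : ∀ z ∈ sphere c R, dslope G v z ≠ 0 := fun z hz h ↦
      hG0 z hz (apply_eq_zero_of_dslope_eq_zero hGv h)
    have hfac : G = (· - v) * dslope G v := (funext (sub_mul_dslope_of_eq_zero hGv)).symm
    have hord : ∀ u ∈ S, analyticOrderNatAt G u =
        analyticOrderNatAt (· - v) u + analyticOrderNatAt (dslope G v) u := by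
      intro u hu
      conv_lhs => rw [hfac]
      refine analyticOrderNatAt_mul (by fun_prop) (hG₁ u (hS hu)) ?_
        (analyticOrderAt_ne_top_of_sphere hR.le hG₁ hG₁0 (hS hu))
      rcases eq_or_ne u v with rfl | huv
      · simp
      · simp [huv]
    have hlin : ∑ u ∈ S, analyticOrderNatAt (· - v) u = 1 := by
      rw [Finset.sum_eq_single_of_mem v hvS fun u _ huv ↦ by simp [analyticOrderNatAt, huv]]
      simp [analyticOrderNatAt]
    rw [Finset.sum_congr rfl hord, Finset.sum_add_distrib, hlin, add_comm] at h
    rw [circleIntegral_logDeriv_eq_add_dslope (hG.mono sphere_subset_closedBall) hG0 hvb hGv,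
      ih hG₁ hG₁0
      (fun z hz h ↦ hzero z hz (apply_eq_zero_of_dslope_eq_zero hGv h)) (Nat.succ_injective h)]
    push_cast
    ring

theorem forall_ne_zero_of_circleIntegral_logDeriv_eq_zero (hR : 0 < R)
    (hG : AnalyticOnNhd ℂ G (closedBall c R)) (hG0 : ∀ z ∈ sphere c R, G z ≠ 0)
    (h : ∮ z in C(c, R), logDeriv G z = 0) : ∀ z ∈ closedBall c R, G z ≠ 0 := by
  obtain ⟨x, hx⟩ := NormedSpace.sphere_nonempty (x := c).2 hR.le
  have hfin := hG.finite_zeros_of_isCompact (isCompact_closedBall c R)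
    (isConnected_closedBall hR.le) (sphere_subset_closedBall hx) (hG0 x hx)
  have hS : ↑hfin.toFinset ⊆ closedBall c R := fun z hz ↦ (hfin.mem_toFinset.1 hz).1
  have hzero : ∀ z ∈ closedBall c R, G z = 0 → z ∈ hfin.toFinset := fun z hz hGz ↦
    hfin.mem_toFinset.2 ⟨hz, hGz⟩
  rw [circleIntegral_logDeriv_eq_sum_analyticOrderNatAt hR hS hG hG0 hzero, mul_eq_zero,
    Nat.cast_eq_zero, Finset.sum_eq_zero_iff] at h
  intro z hz hGz
  refine analyticOrderNatAt_ne_zero_of_sphere hR.le hG hG0 hz hGz ?_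
  exact (h.resolve_right two_pi_I_ne_zero) z (hzero z hz hGz)

theorem exists_eq_prod_mul_of_circleIntegral_logDeriv (hR : 0 < R)
    (hG : AnalyticOnNhd ℂ G (closedBall c R)) (hG0 : ∀ z ∈ sphere c R, G z ≠ 0) {n : ℕ}
    (h : ∮ z in C(c, R), logDeriv G z = n * (2 * π * I)) :
    ∃ w : Fin n → ℂ, (∀ i, w i ∈ ball c R) ∧ ∃ H : ℂ → ℂ, AnalyticOnNhd ℂ H (closedBall c R) ∧
      (∀ z ∈ closedBall c R, H z ≠ 0) ∧ ∀ z, G z = (∏ i, (z - w i)) * H z := by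
  induction n generalizing G with
  | zero =>
    refine ⟨Fin.elim0, fun i ↦ i.elim0, G, hG, ?_, by simp⟩
    exact forall_ne_zero_of_circleIntegral_logDeriv_eq_zero hR hG hG0 (by simpa using h)
  | succ n ih =>
    obtain ⟨v, hv, hGv⟩ : ∃ v ∈ closedBall c R, G v = 0 := by
      by_contra! hne
      rw [circleIntegral_logDeriv_eq_zero hR.le hG hne] at h
      exact mul_ne_zero (Nat.cast_ne_zero.2 n.succ_ne_zero) two_pi_I_ne_zero h.symm
    have hvb : v ∈ ball c R := by
      rw [← closedBall_sdiff_sphere]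
      exact ⟨hv, fun hs ↦ hG0 v hs hGv⟩
    obtain ⟨w, hw, H, hH, hH0, hfac⟩ := ih (hG.dslope v)
      (fun z hz h ↦ hG0 z hz (apply_eq_zero_of_dslope_eq_zero hGv h)) (by
        rw [circleIntegral_logDeriv_eq_add_dslope (hG.mono sphere_subset_closedBall) hG0 hvb hGv]
          at h
        push_cast at h
        linear_combination h)
    refine ⟨Fin.cons v w, Fin.cases hvb hw, H, hH, hH0, fun z ↦ ?_⟩
    rw [Fin.prod_univ_succ, ← sub_mul_dslope_of_eq_zero hGv, hfac]
    simp only [Fin.cons_zero, Fin.cons_succ]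
    ring

end CircleIntegral

theorem norm_sub_sq_sub_mul_sub_sq_lt {z a b b' : ℂ} (ha : 3 * ‖a‖ < ‖z‖) (hb : 3 * ‖b‖ < ‖z‖)
    (hb' : 3 * ‖b'‖ < ‖z‖) : ‖(z - a) ^ 2 - b * b' - z ^ 2‖ < ‖z ^ 2‖ := by
  calc ‖(z - a) ^ 2 - b * b' - z ^ 2‖ = ‖a * (a - 2 * z) - b * b'‖ := by ring_nf
    _ ≤ ‖a‖ * (‖a‖ + 2 * ‖z‖) + ‖b‖ * ‖b'‖ := by
      refine (norm_sub_le _ _).trans ?_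
      rw [norm_mul, norm_mul]
      gcongr
      exact (norm_sub_le _ _).trans (by rw [norm_mul, Complex.norm_two])
    _ < ‖z ^ 2‖ := by
      rw [norm_pow]
      nlinarith [norm_nonneg a, norm_nonneg b, norm_nonneg b']

theorem stmt13 (R : ℝ) (hR : 0 < R) (α βp βm : ℂ → ℂ)
    (hα : AnalyticOnNhd ℂ α (Metric.closedBall 0 R))
    (hβp : AnalyticOnNhd ℂ βp (Metric.closedBall 0 R))
    (hβm : AnalyticOnNhd ℂ βm (Metric.closedBall 0 R))
    (hαs : ∀ z : ℂ, ‖z‖ = R → ‖α z‖ / R < 1 / 3)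
    (hps : ∀ z : ℂ, ‖z‖ = R → ‖βp z‖ / R < 1 / 3)
    (hms : ∀ z : ℂ, ‖z‖ = R → ‖βm z‖ / R < 1 / 3) :
    ∃ z₁ z₂ : ℂ, z₁ ∈ Metric.ball (0 : ℂ) R ∧ z₂ ∈ Metric.ball (0 : ℂ) R ∧
      ∃ g : ℂ → ℂ, AnalyticOnNhd ℂ g (Metric.closedBall 0 R) ∧
        (∀ z ∈ Metric.closedBall (0 : ℂ) R, g z ≠ 0) ∧
        ∀ z ∈ Metric.closedBall (0 : ℂ) R,
          (z - α z) ^ 2 - βp z * βm z = (z - z₁) * (z - z₂) * g z := by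
  set F : ℂ → ℂ := fun z ↦ (z - α z) ^ 2 - βp z * βm z
  have hF : AnalyticOnNhd ℂ F (closedBall 0 R) := fun z hz ↦
    ((analyticAt_id.sub (hα z hz)).pow 2).sub ((hβp z hz).mul (hβm z hz))
  have hlt : ∀ z ∈ sphere (0 : ℂ) R, ‖F z - z ^ 2‖ < ‖z ^ 2‖ := by
    intro z hz
    rw [mem_sphere_zero_iff_norm] at hz
    have small : ∀ f : ℂ → ℂ, (∀ z : ℂ, ‖z‖ = R → ‖f z‖ / R < 1 / 3) → 3 * ‖f z‖ < ‖z‖ :=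
      fun f hf ↦ by linarith [(div_lt_iff₀ hR).1 (hf z hz)]
    exact norm_sub_sq_sub_mul_sub_sq_lt (small α hαs) (small βp hps) (small βm hms)
  have hF0 : ∀ z ∈ sphere (0 : ℂ) R, F z ≠ 0 := fun z hz h ↦ by simpa [h] using hlt z hz
  have hwind : ∮ z in C(0, R), logDeriv F z = (2 : ℕ) * (2 * π * I) := by
    rw [circleIntegral_logDeriv_eq_of_norm_sub_lt (H := (· ^ 2)) hR.le
      (hF.mono sphere_subset_closedBall) (fun z _ ↦ analyticAt_id.pow 2) hlt,
      circleIntegral_logDeriv_pow hR]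
  obtain ⟨w, hw, g, hg, hg0, hfac⟩ := exists_eq_prod_mul_of_circleIntegral_logDeriv hR hF hF0 hwind
  exact ⟨w 0, w 1, hw 0, hw 1, g, hg, hg0, fun z _ ↦
    (hfac z).trans (by rw [Fin.prod_univ_two])⟩
end
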